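/- arXiv:math/0111100 — 4 statements merged into one kernel-verified Lean document; each statement's English description precedes it below -/
import Mathlib

section
/- Let ψ be a wavelet for an irreducible unitary representation (ρ, H_ρ) of a locally compact Hausdorff group G. Then the wavelet transform W_ψ : H_ρ → L²(G), v ↦ (g ↦ (v | ρ(g)ψ)), is a continuous linear map that intertwines ρ with the left regular representation of G on L²(G): W_ψ(ρ(x)u)(y) = (W_ψ u)(x^{-1}y) for all x, y ∈ G and u ∈ H_ρ. -/
/-!
Linearity and the intertwining relation are algebraic, the latter because `ρ x` is unitary and
`ρ y = ρ x ∘ ρ (x⁻¹ y)`. Boundedness of `W_ψ` into `L²(G)` comes from the closed graph theorem: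
`L²`-convergence gives a.e. convergence along a subsequence, and every evaluation
`v ↦ (v ∣ ρ(g)ψ)` is continuous, so the graph of `W_ψ` is closed.
-/

open MeasureTheory
open scoped InnerProductSpace ENNReal

noncomputable section

/-- A unitary representation `ρ` of `G` on `E` is irreducible if it has no proper nonzero
closed invariant subspace. -/
def IsIrreducibleRep {G : Type*} [Group G] {E : Type*} [NormedAddCommGroup E]
    [InnerProductSpace ℂ E] (ρ : G →* (E ≃ₗᵢ[ℂ] E)) : Prop :=
  ∀ S : Submodule ℂ E, IsClosed (S : Set E) → (∀ g : G, ∀ v ∈ S, ρ g v ∈ S) →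
    S = ⊥ ∨ S = ⊤

open Filter Topology

namespace MeasureTheory

variable {α F : Type*} [MeasurableSpace α] {μ : Measure α} {p : ℝ≥0∞} [NormedAddCommGroup F]

theorem Lp.ae_eq_of_tendsto_of_ae_tendsto [Fact (1 ≤ p)] {f : ℕ → Lp F p μ} {g : Lp F p μ}
    {h : α → F}
    (hfg : Tendsto f atTop (𝓝 g)) (hfh : ∀ᵐ a ∂μ, Tendsto (fun n => f n a) atTop (𝓝 (h a))) :
    g =ᵐ[μ] h := by
  obtain ⟨ns, hns, hae⟩ := (tendstoInMeasure_of_tendsto_Lp hfg).exists_seq_tendsto_ae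
  filter_upwards [hae, hfh] with a hag hah
  exact tendsto_nhds_unique hag (hah.comp hns.tendsto_atTop)

section PointwiseLp

variable {𝕜 E : Type*} [NontriviallyNormedField 𝕜] [NormedAddCommGroup E] [NormedSpace 𝕜 E]
  [NormedSpace 𝕜 F] (Φ : α → E →L[𝕜] F)

def pointwiseLpMap (hΦ : ∀ v, MemLp (fun a => Φ a v) p μ) : E →ₗ[𝕜] Lp F p μ where
  toFun v := (hΦ v).toLp _
  map_add' u v := by
    rw [MemLp.toLp_congr (hΦ (u + v)) ((hΦ u).add (hΦ v))
      (.of_forall fun a => map_add (Φ a) u v), MemLp.toLp_add]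
  map_smul' c v := by
    rw [MemLp.toLp_congr (hΦ (c • v)) ((hΦ v).const_smul c)
      (.of_forall fun a => map_smul (Φ a) c v), MemLp.toLp_const_smul]
    rfl

theorem continuous_pointwiseLpMap [Fact (1 ≤ p)] [CompleteSpace E] [CompleteSpace F]
    (hΦ : ∀ v, MemLp (fun a => Φ a v) p μ) : Continuous (pointwiseLpMap Φ hΦ) := by
  refine (pointwiseLpMap Φ hΦ).continuous_of_seq_closed_graph fun u x y hux huy => Lp.ext ?_
  have hcoe : ∀ᵐ a ∂μ, ∀ n, pointwiseLpMap Φ hΦ (u n) a = Φ a (u n) :=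
    ae_all_iff.mpr fun n => (hΦ (u n)).coeFn_toLp
  refine (Lp.ae_eq_of_tendsto_of_ae_tendsto huy ?_).trans (hΦ x).coeFn_toLp.symm
  filter_upwards [hcoe] with a ha
  simp only [Function.comp_apply, ha]
  exact ((Φ a).continuous.tendsto x).comp hux

theorem exists_eLpNorm_pointwise_le [Fact (1 ≤ p)] [CompleteSpace E] [CompleteSpace F]
    (hΦ : ∀ v, MemLp (fun a => Φ a v) p μ) :
    ∃ C : ℝ, 0 ≤ C ∧ ∀ v : E, eLpNorm (fun a => Φ a v) p μ ≤ ENNReal.ofReal (C * ‖v‖) := by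
  let T : E →L[𝕜] Lp F p μ := ⟨pointwiseLpMap Φ hΦ, continuous_pointwiseLpMap Φ hΦ⟩
  refine ⟨‖T‖, norm_nonneg _, fun v => ?_⟩
  calc eLpNorm (fun a => Φ a v) p μ = ENNReal.ofReal ‖T v‖ := by
        rw [show T v = (hΦ v).toLp _ from rfl, Lp.norm_toLp, ENNReal.ofReal_toReal (hΦ v).2.ne]
    _ ≤ ENNReal.ofReal (‖T‖ * ‖v‖) := ENNReal.ofReal_le_ofReal (T.le_opNorm v)

end PointwiseLp

end MeasureTheory

theorem inner_apply_apply_eq_inner_inv_mul_apply {𝕜 G E : Type*} [RCLike 𝕜] [Group G]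
    [NormedAddCommGroup E] [InnerProductSpace 𝕜 E] (ρ : G →* (E ≃ₗᵢ[𝕜] E)) (ψ : E) (x : G)
    (u : E) (y : G) :
    ⟪ρ y ψ, ρ x u⟫_𝕜 = ⟪ρ (x⁻¹ * y) ψ, u⟫_𝕜 := by
  conv_lhs => rw [← mul_inv_cancel_left x y, map_mul]
  exact (ρ x).inner_map_map _ _

theorem wavelet_transform_is_continuous_intertwiner_general
    {G : Type*} [Group G] [MeasurableSpace G]
    (μ : Measure G)
    {E : Type*} [NormedAddCommGroup E] [InnerProductSpace ℂ E] [CompleteSpace E]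
    (ρ : G →* (E ≃ₗᵢ[ℂ] E))
    (ψ : E)
    (hψ : ∀ v : E, MemLp (fun g : G => ⟪ρ g ψ, v⟫_ℂ) 2 μ) :
    -- `W_ψ` is linear
    (∀ (c : ℂ) (u v : E) (g : G),
      ⟪ρ g ψ, c • u + v⟫_ℂ = c * ⟪ρ g ψ, u⟫_ℂ + ⟪ρ g ψ, v⟫_ℂ) ∧
    -- `W_ψ` is continuous as a map into `L²(G)`
    (∃ C : ℝ, 0 ≤ C ∧ ∀ u : E,
      eLpNorm (fun g : G => ⟪ρ g ψ, u⟫_ℂ) 2 μ ≤ ENNReal.ofReal (C * ‖u‖)) ∧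
    -- `W_ψ` intertwines `ρ` with the left regular representation
    (∀ (x : G) (u : E) (y : G), ⟪ρ y ψ, ρ x u⟫_ℂ = ⟪ρ (x⁻¹ * y) ψ, u⟫_ℂ) := by
  refine ⟨fun c u v g => by rw [inner_add_right, inner_smul_right], ?_,
    inner_apply_apply_eq_inner_inv_mul_apply ρ ψ⟩
  exact exists_eLpNorm_pointwise_le (fun g => innerSL ℂ (ρ g ψ)) hψ

/-- Let `ψ` be a wavelet for an irreducible unitary representation `(ρ, H_ρ)` of a locally
compact Hausdorff group `G`, i.e. `ψ ≠ 0` and `g ↦ (v ∣ ρ(g)ψ)` is in `L²(G)` for every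
`v`. Then the wavelet transform `W_ψ v (g) = (v ∣ ρ(g)ψ)` is a continuous linear map
`H_ρ → L²(G)` intertwining `ρ` with the left regular representation:
`W_ψ(ρ(x)u)(y) = W_ψ u(x⁻¹ y)`.  (Here `(v ∣ w)` denotes the inner product, linear in
`v`, i.e. `⟪w, v⟫_ℂ` in Mathlib's convention.) -/
theorem wavelet_transform_is_continuous_intertwiner
    {G : Type*} [Group G] [TopologicalSpace G] [IsTopologicalGroup G]
    [LocallyCompactSpace G] [T2Space G] [MeasurableSpace G] [BorelSpace G]
    (μ : Measure G) [μ.IsHaarMeasure]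
    {E : Type*} [NormedAddCommGroup E] [InnerProductSpace ℂ E] [CompleteSpace E]
    (ρ : G →* (E ≃ₗᵢ[ℂ] E)) (hcont : ∀ v : E, Continuous fun g : G => ρ g v)
    (hirr : IsIrreducibleRep ρ)
    (ψ : E) (hψ0 : ψ ≠ 0)
    (hψ : ∀ v : E, MemLp (fun g : G => ⟪ρ g ψ, v⟫_ℂ) 2 μ) :
    -- `W_ψ` is linear
    (∀ (c : ℂ) (u v : E) (g : G),
      ⟪ρ g ψ, c • u + v⟫_ℂ = c * ⟪ρ g ψ, u⟫_ℂ + ⟪ρ g ψ, v⟫_ℂ) ∧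
    -- `W_ψ` is continuous as a map into `L²(G)`
    (∃ C : ℝ, 0 ≤ C ∧ ∀ u : E,
      eLpNorm (fun g : G => ⟪ρ g ψ, u⟫_ℂ) 2 μ ≤ ENNReal.ofReal (C * ‖u‖)) ∧
    -- `W_ψ` intertwines `ρ` with the left regular representation
    (∀ (x : G) (u : E) (y : G), ⟪ρ y ψ, ρ x u⟫_ℂ = ⟪ρ (x⁻¹ * y) ψ, u⟫_ℂ) :=
  wavelet_transform_is_continuous_intertwiner_general μ ρ ψ hψ
end
end

section
/- Let (ρ, H_ρ) and (τ, H_τ) be irreducible unitary representations of a locally compact Hausdorff group G with wavelets ψ and η respectively. (a) If ρ and τ are not unitarily equivalent, then (W_ψ u | W_η v)_{L²(G)} = 0 for all u ∈ H_ρ and v ∈ H_τ; in particular the images of W_ψ and W_η are orthogonal subspaces of L²(G). (b) If τ = ρ (same representation on the same space), there exists a complex constant C_{ψ,η} such that (W_ψ u | W_η v)_{L²(G)} = C_{ψ,η} (u | v) for all u, v ∈ H_ρ, and C_{ψ,ψ} > 0. -/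
open MeasureTheory
open scoped InnerProductSpace ENNReal

noncomputable section

/-- `ψ` is a wavelet for the unitary representation `ρ`: a nonzero vector all of whose
matrix coefficients `g ↦ (v ∣ ρ(g)ψ) = ⟪ρ(g)ψ, v⟫` are square integrable. -/
def IsWaveletFor {G : Type*} [Group G] [MeasurableSpace G] (μ : Measure G)
    {E : Type*} [NormedAddCommGroup E] [InnerProductSpace ℂ E]
    (ρ : G →* (E ≃ₗᵢ[ℂ] E)) (ψ : E) : Prop :=
  ψ ≠ 0 ∧ ∀ v : E, MemLp (fun g : G => ⟪ρ g ψ, v⟫_ℂ) 2 μ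

/-!
The operator `T = W_η* W_ψ` satisfies `(T u ∣ v) = (W_ψ u ∣ W_η v)` and, by left invariance of
Haar measure, intertwines `ρ` with `τ`. Schur's lemma makes every self-intertwiner of an
irreducible representation a scalar: a self-adjoint one has a one-point spectrum, since the
continuous functional calculus would otherwise split it into two nonzero intertwiners with
product zero, and the kernel of the first is a proper nonzero closed invariant subspace.

So for `τ = ρ` the operator `T` is the constant `C_{ψ,η}`, and `W_ψ* W_ψ` is a positive scalar
because `W_ψ ψ ≠ 0`: the coefficient `g ↦ (ψ ∣ ρ(g)ψ)` is continuous and nonzero at `1`, and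
Haar measure charges open sets. For inequivalent `ρ, τ`, a nonzero `T` would have `T* T = c > 0`,
making `c^{-1/2} T` an isometric intertwiner whose closed, invariant, nonzero range is everything,
that is, a unitary equivalence.
-/

open ContinuousLinearMap
open scoped ComplexStarModule

lemma norm_apply_sq_of_adjoint_comp_self_eq {E H : Type*} [NormedAddCommGroup E]
    [InnerProductSpace ℂ E] [CompleteSpace E] [NormedAddCommGroup H] [InnerProductSpace ℂ H]
    [CompleteSpace H] {T : E →L[ℂ] H} {c : ℝ}
    (hc : adjoint T ∘L T = algebraMap ℝ (E →L[ℂ] E) c) (v : E) :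
    ‖T v‖ ^ 2 = c * ‖v‖ ^ 2 := by
  rw [apply_norm_sq_eq_inner_adjoint_left, hc, ContinuousLinearMap.algebraMap_apply,
    inner_smul_left_eq_smul, inner_self_eq_norm_sq_to_K]
  norm_cast

section Intertwining

variable {G : Type*} [Group G]
  {E : Type*} [NormedAddCommGroup E] [InnerProductSpace ℂ E]
  {F : Type*} [NormedAddCommGroup F] [InnerProductSpace ℂ F]
  {ρ : G →* (E ≃ₗᵢ[ℂ] E)} {τ : G →* (F ≃ₗᵢ[ℂ] F)}

lemma map_mul_apply (ρ : G →* (E ≃ₗᵢ[ℂ] E)) (g h : G) (v : E) :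
    ρ (g * h) v = ρ g (ρ h v) := by
  rw [map_mul]; rfl

lemma map_inv_apply (ρ : G →* (E ≃ₗᵢ[ℂ] E)) (g : G) (v : E) :
    ρ g⁻¹ v = (ρ g).symm v := by
  rw [map_inv]; rfl

lemma inner_map_apply_left (ρ : G →* (E ≃ₗᵢ[ℂ] E)) (g : G) (u v : E) :
    ⟪ρ g u, v⟫_ℂ = ⟪u, ρ g⁻¹ v⟫_ℂ := by
  rw [map_inv_apply]; exact (ρ g).inner_map_eq_flip u v

lemma inner_map_apply_right (ρ : G →* (E ≃ₗᵢ[ℂ] E)) (g : G) (u v : E) :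
    ⟪u, ρ g v⟫_ℂ = ⟪ρ g⁻¹ u, v⟫_ℂ := by
  rw [inner_map_apply_left, inv_inv]

lemma inner_map_apply_map_apply (ρ : G →* (E ≃ₗᵢ[ℂ] E)) (g h : G) (u v : E) :
    ⟪ρ g u, ρ h v⟫_ℂ = ⟪ρ (h⁻¹ * g) u, v⟫_ℂ := by
  rw [← (ρ h⁻¹).inner_map_map, map_mul_apply, map_inv_apply, map_inv_apply,
    LinearIsometryEquiv.symm_apply_apply]

def Intertwines (ρ : G →* (E ≃ₗᵢ[ℂ] E)) (τ : G →* (F ≃ₗᵢ[ℂ] F)) (T : E →L[ℂ] F) : Prop :=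
  ∀ g v, T (ρ g v) = τ g (T v)

namespace Intertwines

lemma smul {T : E →L[ℂ] F} (hT : Intertwines ρ τ T) (c : ℂ) : Intertwines ρ τ (c • T) :=
  fun g v => by simp [hT g v]

lemma comp {H : Type*} [NormedAddCommGroup H] [InnerProductSpace ℂ H]
    {σ : G →* (H ≃ₗᵢ[ℂ] H)} {S : F →L[ℂ] H} {T : E →L[ℂ] F}
    (hS : Intertwines τ σ S) (hT : Intertwines ρ τ T) : Intertwines ρ σ (S ∘L T) :=
  fun g v => by simp [hT g v, hS g (T v)]

lemma adjoint [CompleteSpace E] [CompleteSpace F] {T : E →L[ℂ] F} (hT : Intertwines ρ τ T) :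
    Intertwines τ ρ (adjoint T) := fun g w => by
  refine ext_inner_right ℂ fun v => ?_
  rw [adjoint_inner_left, inner_map_apply_left, ← hT, ← adjoint_inner_left,
    inner_map_apply_left]

end Intertwines

lemma intertwines_self_iff_commute {T : E →L[ℂ] E} :
    Intertwines ρ ρ T ↔ ∀ g, Commute (ρ g : E →L[ℂ] E) T :=
  ⟨fun hT g => ContinuousLinearMap.ext fun v => (hT g v).symm,
    fun hT g v => (DFunLike.congr_fun (hT g) v).symm⟩

end Intertwining

namespace IsIrreducibleRep

variable {G : Type*} [Group G]
  {E : Type*} [NormedAddCommGroup E] [InnerProductSpace ℂ E]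
  {F : Type*} [NormedAddCommGroup F] [InnerProductSpace ℂ F]
  {ρ : G →* (E ≃ₗᵢ[ℂ] E)} {τ : G →* (F ≃ₗᵢ[ℂ] F)}

lemma ker_eq_bot_of_intertwines (hρ : IsIrreducibleRep ρ) {T : E →L[ℂ] F}
    (hT : Intertwines ρ τ T) (hT0 : T ≠ 0) : T.ker = ⊥ := by
  refine (hρ _ T.isClosed_ker fun g v hv => ?_).resolve_right fun htop => hT0 ?_
  · simp_all [LinearMap.mem_ker, hT g v]
  · ext v
    simpa using htop.ge (Submodule.mem_top (x := v))

lemma range_eq_top_of_intertwines (hρ : IsIrreducibleRep ρ) {T : F →L[ℂ] E}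
    (hT : Intertwines τ ρ T) (hclosed : IsClosed (T.range : Set E)) (hT0 : T ≠ 0) :
    T.range = ⊤ := by
  refine (hρ _ hclosed fun g v hv => ?_).resolve_left fun hbot => hT0 ?_
  · obtain ⟨w, rfl⟩ := hv
    exact ⟨τ g w, hT g w⟩
  · ext v
    simpa using hbot.le ⟨v, rfl⟩

lemma eq_zero_or_eq_zero_of_mul_eq_zero (hρ : IsIrreducibleRep ρ) {P Q : E →L[ℂ] E}
    (hP : Intertwines ρ ρ P) (hPQ : P * Q = 0) : P = 0 ∨ Q = 0 := by
  refine or_iff_not_imp_left.2 fun hP0 => ext fun v => ?_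
  have hQv : Q v ∈ P.ker := by simpa using congr($hPQ v)
  simpa [ker_eq_bot_of_intertwines hρ hP hP0] using hQv

variable [CompleteSpace E]

lemma exists_eq_algebraMap_of_isSelfAdjoint [Nontrivial E] (hρ : IsIrreducibleRep ρ)
    {A : E →L[ℂ] E} (hA : IsSelfAdjoint A) (hAρ : Intertwines ρ ρ A) :
    ∃ c : ℝ, A = algebraMap ℝ (E →L[ℂ] E) c := by
  -- Spectral points `s < m < t` would give the nonzero intertwiners `(A - m)⁺`, `(A - m)⁻`
  -- with product zero.
  have hsub : ∀ s ∈ spectrum ℝ A, ∀ t ∈ spectrum ℝ A, ¬ s < t := by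
    intro s hs t ht hst
    obtain ⟨m, hsm, hmt⟩ := exists_between hst
    have hcomm := intertwines_self_iff_commute.1 hAρ
    have hcfc : ∀ f : ℝ → ℝ, Intertwines ρ ρ (cfc f A) := fun f =>
      intertwines_self_iff_commute.2 fun g => ((hcomm g).symm.cfc_real f).symm
    have hne : ∀ f : ℝ → ℝ, Continuous f → ∀ x ∈ spectrum ℝ A, f x ≠ 0 → cfc f A ≠ 0 :=
      fun f hf x hx hfx h0 => hfx <| by
        simpa using (eqOn_of_cfc_eq_cfc (h0.trans (cfc_zero ℝ A).symm) hf.continuousOn) hx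
    have hPQ : cfc (fun x => max (x - m) 0) A * cfc (fun x => max (m - x) 0) A = 0 := by
      rw [← cfc_mul .., ← cfc_zero ℝ A]
      refine cfc_congr fun x _ => ?_
      rcases le_total x m with hx | hx <;> simp [hx]
    rcases eq_zero_or_eq_zero_of_mul_eq_zero hρ (hcfc _) hPQ with h | h
    · exact hne (fun x => max (x - m) 0) (by fun_prop) t ht
        (lt_max_of_lt_left (sub_pos.2 hmt)).ne' h
    · exact hne (fun x => max (m - x) 0) (by fun_prop) s hs
        (lt_max_of_lt_left (sub_pos.2 hsm)).ne' h
  obtain ⟨c, hc⟩ := ContinuousFunctionalCalculus.spectrum_nonempty (R := ℝ) A hA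
  refine ⟨c, CFC.eq_algebraMap_of_spectrum_subset_singleton A c fun t ht => ?_⟩
  exact le_antisymm (not_lt.1 (hsub c hc t ht)) (not_lt.1 (hsub t ht c hc))

lemma exists_eq_smul_one [Nontrivial E] (hρ : IsIrreducibleRep ρ) {T : E →L[ℂ] E}
    (hT : Intertwines ρ ρ T) : ∃ c : ℂ, T = c • 1 := by
  have hcomm := intertwines_self_iff_commute.1 hT
  have hcomm' := intertwines_self_iff_commute.1 hT.adjoint
  obtain ⟨a, ha⟩ := exists_eq_algebraMap_of_isSelfAdjoint hρ (ℜ T).2 <|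
    intertwines_self_iff_commute.2 fun g => by
      rw [realPart_apply_coe]
      exact ((hcomm g).add_right (hcomm' g)).smul_right _
  obtain ⟨b, hb⟩ := exists_eq_algebraMap_of_isSelfAdjoint hρ (ℑ T).2 <|
    intertwines_self_iff_commute.2 fun g => by
      rw [imaginaryPart_apply_coe]
      exact (((hcomm g).sub_right (hcomm' g)).smul_right _).smul_right _
  refine ⟨a + Complex.I * b, ?_⟩
  rw [← realPart_add_I_smul_imaginaryPart T, ha, hb, Algebra.algebraMap_eq_smul_one,
    Algebra.algebraMap_eq_smul_one, ← Complex.coe_smul, ← Complex.coe_smul]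
  module

lemma exists_pos_adjoint_comp_self_eq {H : Type*} [NormedAddCommGroup H]
    [InnerProductSpace ℂ H] [CompleteSpace H] (hρ : IsIrreducibleRep ρ) {T : E →L[ℂ] H}
    (hT : Intertwines ρ ρ (adjoint T ∘L T)) (hT0 : T ≠ 0) :
    ∃ c : ℝ, 0 < c ∧ adjoint T ∘L T = algebraMap ℝ (E →L[ℂ] E) c := by
  obtain ⟨v, hv⟩ : ∃ v, T v ≠ 0 := by simpa [ContinuousLinearMap.ext_iff] using hT0
  have : Nontrivial E := ⟨⟨v, 0, by rintro rfl; simp at hv⟩⟩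
  obtain ⟨c, hc⟩ := exists_eq_algebraMap_of_isSelfAdjoint hρ
    (isPositive_adjoint_comp_self T).isSelfAdjoint hT
  have hTv : 0 < c * ‖v‖ ^ 2 := by
    rw [← norm_apply_sq_of_adjoint_comp_self_eq hc]
    positivity
  exact ⟨c, pos_of_mul_pos_left hTv (by positivity), hc⟩

lemma exists_linearIsometryEquiv_of_intertwines [CompleteSpace F] (hρ : IsIrreducibleRep ρ)
    (hτ : IsIrreducibleRep τ) {T : E →L[ℂ] F} (hT : Intertwines ρ τ T) (hT0 : T ≠ 0) :
    ∃ U : E ≃ₗᵢ[ℂ] F, ∀ g v, U (ρ g v) = τ g (U v) := by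
  obtain ⟨c, hc0, hc⟩ := exists_pos_adjoint_comp_self_eq hρ (hT.adjoint.comp hT) hT0
  have hU : ∀ v, ‖((√c)⁻¹ : ℂ) • T v‖ = ‖v‖ := fun v => by
    have hTv : ‖T v‖ = √c * ‖v‖ := by
      rw [← Real.sqrt_sq (norm_nonneg (T v)), norm_apply_sq_of_adjoint_comp_self_eq hc,
        Real.sqrt_mul hc0.le, Real.sqrt_sq (norm_nonneg v)]
    rw [norm_smul, hTv, norm_inv, Complex.norm_real,
      Real.norm_of_nonneg (Real.sqrt_nonneg c), inv_mul_cancel_left₀ (Real.sqrt_pos.2 hc0).ne']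
  let L : E →ₗᵢ[ℂ] F := ⟨(((√c)⁻¹ : ℂ) • T : E →L[ℂ] F), hU⟩
  have hL : Intertwines ρ τ (((√c)⁻¹ : ℂ) • T) := hT.smul _
  have hrange := range_eq_top_of_intertwines hτ hL L.isometry.isClosedEmbedding.isClosed_range
    (by simpa [(Real.sqrt_pos.2 hc0).ne'] using hT0)
  exact ⟨.ofSurjective L (LinearMap.range_eq_top.1 hrange), hL⟩

end IsIrreducibleRep

-- Closed graph theorem: convergence in `Lp` gives a.e. convergence along a subsequence.
lemma LinearMap.continuous_of_ae_eq_continuous_apply {𝕜 E α F : Type*}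
    [NontriviallyNormedField 𝕜] [NormedAddCommGroup E] [NormedSpace 𝕜 E] [CompleteSpace E]
    [MeasurableSpace α] {μ : Measure α} [NormedAddCommGroup F] [NormedSpace 𝕜 F]
    [CompleteSpace F] {p : ℝ≥0∞} [Fact (1 ≤ p)] (L : E →ₗ[𝕜] Lp F p μ) (f : E → α → F)
    (hf : ∀ a, Continuous fun v => f v a) (hL : ∀ v, L v =ᵐ[μ] f v) : Continuous L := by
  refine L.continuous_of_seq_closed_graph fun u x y hu hLu => Lp.ext ?_
  obtain ⟨ns, hns, hae⟩ := (tendstoInMeasure_of_tendsto_Lp hLu).exists_seq_tendsto_ae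
  filter_upwards [hae, hL x, ae_all_iff.2 fun n => hL (u n)] with a ha hx hun
  rw [hx]
  refine tendsto_nhds_unique ha ?_
  simp only [Function.comp_apply, hun]
  exact ((hf a).tendsto x).comp (hu.comp hns.tendsto_atTop)

section Wavelet

variable {G : Type*} [Group G] [MeasurableSpace G] {μ : Measure G}
  {E : Type*} [NormedAddCommGroup E] [InnerProductSpace ℂ E] [CompleteSpace E]
  {F : Type*} [NormedAddCommGroup F] [InnerProductSpace ℂ F] [CompleteSpace F]
  {ρ : G →* (E ≃ₗᵢ[ℂ] E)} {τ : G →* (F ≃ₗᵢ[ℂ] F)} {ψ : E} {η : F}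

variable (ρ ψ) in
def waveletTransform (hψ : ∀ v, MemLp (fun g => ⟪ρ g ψ, v⟫_ℂ) 2 μ) : E →L[ℂ] Lp ℂ 2 μ :=
  let W : E →ₗ[ℂ] Lp ℂ 2 μ :=
    { toFun v := (hψ v).toLp
      map_add' u v := by
        rw [← MemLp.toLp_add]
        exact MemLp.toLp_congr _ _ (.of_forall fun g => inner_add_right ..)
      map_smul' c v := by
        rw [← MemLp.toLp_const_smul]
        exact MemLp.toLp_congr _ _ (.of_forall fun g => inner_smul_right ..) }
  ⟨W, W.continuous_of_ae_eq_continuous_apply _ (fun g => continuous_const.inner continuous_id)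
    fun v => (hψ v).coeFn_toLp⟩

variable (hψ : ∀ v, MemLp (fun g => ⟪ρ g ψ, v⟫_ℂ) 2 μ)
include hψ

lemma coeFn_waveletTransform (v : E) :
    waveletTransform ρ ψ hψ v =ᵐ[μ] fun g => ⟪ρ g ψ, v⟫_ℂ :=
  (hψ v).coeFn_toLp

lemma waveletTransform_self_ne_zero [TopologicalSpace G] [μ.IsOpenPosMeasure]
    (hρψ : Continuous fun g => ρ g ψ) (hψ0 : ψ ≠ 0) : waveletTransform ρ ψ hψ ψ ≠ 0 := by
  intro h
  have hae : (fun g => ⟪ρ g ψ, ψ⟫_ℂ) =ᵐ[μ] 0 :=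
    (coeFn_waveletTransform hψ ψ).symm.trans (h ▸ Lp.coeFn_zero ..)
  have h1 : ⟪ρ 1 ψ, ψ⟫_ℂ = 0 :=
    congr_fun ((hρψ.inner continuous_const).ae_eq_iff_eq μ continuous_const |>.1 hae) 1
  rw [map_one, LinearIsometryEquiv.coe_one, id_eq, inner_self_eq_zero] at h1
  exact hψ0 h1

variable (hη : ∀ v, MemLp (fun g => ⟪τ g η, v⟫_ℂ) 2 μ)
include hη

lemma integral_eq_inner_adjoint_comp_waveletTransform (u : E) (v : F) :
    ∫ g, ⟪ρ g ψ, u⟫_ℂ * (starRingEnd ℂ) ⟪τ g η, v⟫_ℂ ∂μ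
      = ⟪v, (adjoint (waveletTransform τ η hη) ∘L waveletTransform ρ ψ hψ) u⟫_ℂ := by
  rw [comp_apply, adjoint_inner_right, L2.inner_def]
  refine integral_congr_ae ?_
  filter_upwards [coeFn_waveletTransform hψ u, coeFn_waveletTransform hη v] with g hu hv
  rw [RCLike.inner_apply, hu, hv, mul_comm]

lemma intertwines_adjoint_comp_waveletTransform [TopologicalSpace G] [BorelSpace G]
    [ContinuousMul G] [μ.IsMulLeftInvariant] :
    Intertwines ρ τ (adjoint (waveletTransform τ η hη) ∘L waveletTransform ρ ψ hψ) :=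
  fun h u => ext_inner_left ℂ fun v => by
    rw [inner_map_apply_right, ← integral_eq_inner_adjoint_comp_waveletTransform,
      ← integral_eq_inner_adjoint_comp_waveletTransform,
      ← integral_mul_left_eq_self
        (fun g => ⟪ρ g ψ, u⟫_ℂ * (starRingEnd ℂ) ⟪τ g η, τ h⁻¹ v⟫_ℂ) h⁻¹]
    simp only [inner_map_apply_map_apply, inv_inv, mul_inv_cancel_left]

end Wavelet

theorem wavelet_orthogonality_relations_general
    {G : Type*} [Group G] [TopologicalSpace G] [IsTopologicalGroup G]
    [MeasurableSpace G] [BorelSpace G]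
    (μ : Measure G) [μ.IsHaarMeasure]
    {E : Type*} [NormedAddCommGroup E] [InnerProductSpace ℂ E] [CompleteSpace E]
    {F : Type*} [NormedAddCommGroup F] [InnerProductSpace ℂ F] [CompleteSpace F]
    (ρ : G →* (E ≃ₗᵢ[ℂ] E)) (hρcont : ∀ v : E, Continuous fun g : G => ρ g v)
    (hρirr : IsIrreducibleRep ρ)
    (τ : G →* (F ≃ₗᵢ[ℂ] F))
    (hτirr : IsIrreducibleRep τ)
    (ψ : E) (hψ : IsWaveletFor μ ρ ψ)
    (η : F) (hη : IsWaveletFor μ τ η) :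
    -- (a) inequivalent representations give orthogonal wavelet transforms
    ((¬ ∃ U : E ≃ₗᵢ[ℂ] F, ∀ (g : G) (v : E), U (ρ g v) = τ g (U v)) →
      ∀ (u : E) (v : F),
        ∫ g : G, ⟪ρ g ψ, u⟫_ℂ * (starRingEnd ℂ) ⟪τ g η, v⟫_ℂ ∂μ = 0) ∧
    -- (b) for a single representation there is a constant `C_{ψ,η'}` …
    (∀ η' : E, IsWaveletFor μ ρ η' →
      ∃ C : ℂ, ∀ u v : E,
        ∫ g : G, ⟪ρ g ψ, u⟫_ℂ * (starRingEnd ℂ) ⟪ρ g η', v⟫_ℂ ∂μ = C * ⟪v, u⟫_ℂ) ∧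
    -- … and `C_{ψ,ψ} > 0`
    (∃ C : ℝ, 0 < C ∧ ∀ u v : E,
      ∫ g : G, ⟪ρ g ψ, u⟫_ℂ * (starRingEnd ℂ) ⟪ρ g ψ, v⟫_ℂ ∂μ = (C : ℂ) * ⟪v, u⟫_ℂ) := by
  obtain ⟨hψ0, hψ⟩ := hψ
  have : Nontrivial E := nontrivial_of_ne ψ 0 hψ0
  refine ⟨fun hinequiv u v => ?_, fun η' hη' => ?_, ?_⟩
  · have hT : adjoint (waveletTransform τ η hη.2) ∘L waveletTransform ρ ψ hψ = 0 := by
      by_contra hT0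
      exact hinequiv <| IsIrreducibleRep.exists_linearIsometryEquiv_of_intertwines hρirr hτirr
        (intertwines_adjoint_comp_waveletTransform hψ hη.2) hT0
    rw [integral_eq_inner_adjoint_comp_waveletTransform hψ hη.2, hT, zero_apply,
      inner_zero_right]
  · obtain ⟨C, hC⟩ := IsIrreducibleRep.exists_eq_smul_one hρirr
      (intertwines_adjoint_comp_waveletTransform hψ hη'.2)
    refine ⟨C, fun u v => ?_⟩
    rw [integral_eq_inner_adjoint_comp_waveletTransform hψ hη'.2, hC, smul_apply,
      one_apply_eq_self, inner_smul_right]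
  · have hW0 : waveletTransform ρ ψ hψ ≠ 0 := fun h =>
      waveletTransform_self_ne_zero hψ (hρcont ψ) hψ0 (by rw [h, zero_apply])
    obtain ⟨C, hC0, hC⟩ := IsIrreducibleRep.exists_pos_adjoint_comp_self_eq hρirr
      (intertwines_adjoint_comp_waveletTransform hψ hψ) hW0
    refine ⟨C, hC0, fun u v => ?_⟩
    rw [integral_eq_inner_adjoint_comp_waveletTransform hψ hψ, hC,
      ContinuousLinearMap.algebraMap_apply, inner_smul_right_eq_smul, Complex.real_smul]

/-- Orthogonality relations for wavelet transforms.
(a) If `ρ` and `τ` are irreducible unitary representations with wavelets `ψ`, `η` and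
they are not unitarily equivalent, then `(W_ψ u ∣ W_η v)_{L²(G)} = 0` for all `u, v`;
in particular the images of `W_ψ` and `W_η` are orthogonal in `L²(G)`.
(b) If the two representations coincide (wavelets `ψ`, `η'` for the same `ρ`), there
is a constant `C_{ψ,η'} ∈ ℂ` with `(W_ψ u ∣ W_{η'} v) = C_{ψ,η'} (u ∣ v)` for all
`u, v`; and `C_{ψ,ψ} > 0`.
(Paper inner products `(u ∣ w)` are `⟪w, u⟫_ℂ`; `(W_ψ u ∣ W_η v)_{L²(G)}
= ∫ W_ψu(g) conj(W_ηv(g)) dμ(g)`.) -/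
theorem wavelet_orthogonality_relations
    {G : Type*} [Group G] [TopologicalSpace G] [IsTopologicalGroup G]
    [LocallyCompactSpace G] [T2Space G] [MeasurableSpace G] [BorelSpace G]
    (μ : Measure G) [μ.IsHaarMeasure]
    {E : Type*} [NormedAddCommGroup E] [InnerProductSpace ℂ E] [CompleteSpace E]
    {F : Type*} [NormedAddCommGroup F] [InnerProductSpace ℂ F] [CompleteSpace F]
    (ρ : G →* (E ≃ₗᵢ[ℂ] E)) (hρcont : ∀ v : E, Continuous fun g : G => ρ g v)
    (hρirr : IsIrreducibleRep ρ)
    (τ : G →* (F ≃ₗᵢ[ℂ] F)) (hτcont : ∀ v : F, Continuous fun g : G => τ g v)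
    (hτirr : IsIrreducibleRep τ)
    (ψ : E) (hψ : IsWaveletFor μ ρ ψ)
    (η : F) (hη : IsWaveletFor μ τ η) :
    -- (a) inequivalent representations give orthogonal wavelet transforms
    ((¬ ∃ U : E ≃ₗᵢ[ℂ] F, ∀ (g : G) (v : E), U (ρ g v) = τ g (U v)) →
      ∀ (u : E) (v : F),
        ∫ g : G, ⟪ρ g ψ, u⟫_ℂ * (starRingEnd ℂ) ⟪τ g η, v⟫_ℂ ∂μ = 0) ∧
    -- (b) for a single representation there is a constant `C_{ψ,η'}` …
    (∀ η' : E, IsWaveletFor μ ρ η' →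
      ∃ C : ℂ, ∀ u v : E,
        ∫ g : G, ⟪ρ g ψ, u⟫_ℂ * (starRingEnd ℂ) ⟪ρ g η', v⟫_ℂ ∂μ = C * ⟪v, u⟫_ℂ) ∧
    -- … and `C_{ψ,ψ} > 0`
    (∃ C : ℝ, 0 < C ∧ ∀ u v : E,
      ∫ g : G, ⟪ρ g ψ, u⟫_ℂ * (starRingEnd ℂ) ⟪ρ g ψ, v⟫_ℂ ∂μ = (C : ℂ) * ⟪v, u⟫_ℂ) :=
  wavelet_orthogonality_relations_general μ ρ hρcont hρirr τ hτirr ψ hψ η hη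
end
end

section
/- Let ψ be a wavelet for an irreducible unitary representation (ρ, H_ρ) of a locally compact Hausdorff group G, and let f ∈ L²(G). Then the operator ρ(f) applied to ψ is weakly defined, i.e. there is a vector w ∈ H_ρ with (w | u) = ∫_G f(x)(ρ(x)ψ | u) dx for all u ∈ H_ρ, and the adjoint of the wavelet transform satisfies W_ψ* f = w. -/
open MeasureTheory
open scoped InnerProductSpace ENNReal

noncomputable section

theorem inner_adjoint_apply_eq_integral_of_ae_eq_inner
    {α 𝕜 E : Type*} [RCLike 𝕜] [MeasurableSpace α] {μ : Measure α}
    [NormedAddCommGroup E] [InnerProductSpace 𝕜 E] [CompleteSpace E]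
    {k : α → E} {W : E →L[𝕜] Lp 𝕜 2 μ} (hW : ∀ u : E, (W u : α → 𝕜) =ᵐ[μ] fun x => ⟪k x, u⟫_𝕜)
    (f : Lp 𝕜 2 μ) (u : E) :
    ⟪u, ContinuousLinearMap.adjoint W f⟫_𝕜 = ∫ x, (f : α → 𝕜) x * ⟪u, k x⟫_𝕜 ∂μ := by
  rw [ContinuousLinearMap.adjoint_inner_right, L2.inner_def]
  refine integral_congr_ae ?_
  filter_upwards [hW u] with x hx
  rw [hx, RCLike.inner_apply, inner_conj_symm, mul_comm]

theorem wavelet_transform_adjoint_general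
    {G : Type*} [Group G] [MeasurableSpace G]
    (μ : Measure G)
    {E : Type*} [NormedAddCommGroup E] [InnerProductSpace ℂ E] [CompleteSpace E]
    (ρ : G →* (E ≃ₗᵢ[ℂ] E))
    (ψ : E)
    (W : E →L[ℂ] Lp ℂ 2 μ)
    (hW : ∀ u : E, (W u : G → ℂ) =ᵐ[μ] fun g : G => ⟪ρ g ψ, u⟫_ℂ) :
    ∀ f : Lp ℂ 2 μ, ∃ w : E,
      (∀ u : E, ⟪u, w⟫_ℂ = ∫ x : G, (f : G → ℂ) x * ⟪u, ρ x ψ⟫_ℂ ∂μ) ∧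
      ContinuousLinearMap.adjoint W f = w :=
  fun f => ⟨_, inner_adjoint_apply_eq_integral_of_ae_eq_inner hW f, rfl⟩

/-- Let `ψ` be a wavelet for an irreducible unitary representation `(ρ, H_ρ)` of a
locally compact Hausdorff group `G`, and let `W : H_ρ → L²(G)` be the associated
wavelet transform, `W u = [g ↦ (u ∣ ρ(g)ψ)]`.  For `f ∈ L²(G)` the operator value
`ρ(f)ψ` is weakly defined — there is `w ∈ H_ρ` with
`(w ∣ u) = ∫ f(x) (ρ(x)ψ ∣ u) dx` for all `u` — and `W* f = ρ(f)ψ = w`.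
(Paper inner products `(u ∣ w)` are `⟪w, u⟫_ℂ` in Mathlib's convention.) -/
theorem wavelet_transform_adjoint
    {G : Type*} [Group G] [TopologicalSpace G] [IsTopologicalGroup G]
    [LocallyCompactSpace G] [T2Space G] [MeasurableSpace G] [BorelSpace G]
    (μ : Measure G) [μ.IsHaarMeasure]
    {E : Type*} [NormedAddCommGroup E] [InnerProductSpace ℂ E] [CompleteSpace E]
    (ρ : G →* (E ≃ₗᵢ[ℂ] E)) (hcont : ∀ v : E, Continuous fun g : G => ρ g v)
    (hirr : IsIrreducibleRep ρ)
    (ψ : E) (hψ0 : ψ ≠ 0)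
    (hψ : ∀ v : E, MemLp (fun g : G => ⟪ρ g ψ, v⟫_ℂ) 2 μ)
    (W : E →L[ℂ] Lp ℂ 2 μ)
    (hW : ∀ u : E, (W u : G → ℂ) =ᵐ[μ] fun g : G => ⟪ρ g ψ, u⟫_ℂ) :
    ∀ f : Lp ℂ 2 μ, ∃ w : E,
      (∀ u : E, ⟪u, w⟫_ℂ = ∫ x : G, (f : G → ℂ) x * ⟪u, ρ x ψ⟫_ℂ ∂μ) ∧
      ContinuousLinearMap.adjoint W f = w :=
  wavelet_transform_adjoint_general μ ρ ψ W hW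
end
end

section
/- Let ψ be a wavelet for an irreducible unitary representation (ρ, H_ρ) of a locally compact Hausdorff group G. Then the image Im(W_ψ) is a closed subspace of L²(G) consisting of (equivalence classes of) continuous functions, it is a reproducing Hilbert space (point evaluations on Im(W_ψ) are continuous), and with c_ψ = C_{ψ,ψ}^{-1/2} the map U_ψ : u ↦ c_ψ W_ψ u is a unitary isomorphism of H_ρ onto Im(W_ψ). -/
/-!
By the orthogonality relation, `C^{-1/2} W` is an isometry. An isometry from a complete space
has closed range, and Cauchy–Schwarz bounds the matrix coefficient at `g` by `‖ψ‖ ‖u‖`, which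
is `‖ψ‖ C^{-1/2} ‖W u‖`.
-/

open MeasureTheory
open scoped InnerProductSpace ENNReal

noncomputable section

section

variable {𝕜 E F : Type*} [RCLike 𝕜] [SeminormedAddCommGroup E] [InnerProductSpace 𝕜 E]
  [SeminormedAddCommGroup F] [InnerProductSpace 𝕜 F]

theorem norm_eq_sqrt_mul_norm_of_inner_self_eq {f : E → F} {C : ℝ} (hC : 0 ≤ C) {u : E}
    (h : ⟪f u, f u⟫_𝕜 = (C : 𝕜) * ⟪u, u⟫_𝕜) : ‖f u‖ = √C * ‖u‖ := by
  rw [inner_self_eq_norm_sq_to_K, inner_self_eq_norm_sq_to_K] at h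
  have hsq : ‖f u‖ ^ 2 = C * ‖u‖ ^ 2 := by exact_mod_cast h
  rw [← Real.sqrt_sq (norm_nonneg (f u)), hsq, Real.sqrt_mul hC, Real.sqrt_sq (norm_nonneg u)]

theorem norm_inner_linearIsometryEquiv_le (e : E ≃ₗᵢ[𝕜] E) (ψ u : E) :
    ‖⟪e ψ, u⟫_𝕜‖ ≤ ‖ψ‖ * ‖u‖ :=
  calc ‖⟪e ψ, u⟫_𝕜‖ ≤ ‖e ψ‖ * ‖u‖ := norm_inner_le_norm _ _
    _ = ‖ψ‖ * ‖u‖ := by rw [e.norm_map]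

end

theorem norm_eq_inv_mul_norm_of_norm_eq_mul {α β : Type*} [Norm α] [Norm β] {f : α → β}
    {c : ℝ} (hc : c ≠ 0) {u : α} (h : ‖f u‖ = c * ‖u‖) : ‖u‖ = c⁻¹ * ‖f u‖ := by
  rw [h, inv_mul_cancel_left₀ hc]

theorem ContinuousLinearMap.isClosed_range_of_norm_eq_mul {𝕜 E F : Type*} [Ring 𝕜]
    [SeminormedAddCommGroup E] [Module 𝕜 E] [CompleteSpace E] [NormedAddCommGroup F]
    [Module 𝕜 F] (T : E →L[𝕜] F) {c : ℝ} (hc : 0 < c) (hT : ∀ u, ‖T u‖ = c * ‖u‖) :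
    IsClosed (Set.range T) :=
  (T.antilipschitz_of_bound (K := ⟨c⁻¹, inv_nonneg.2 hc.le⟩) fun u =>
    (norm_eq_inv_mul_norm_of_norm_eq_mul hc.ne' (hT u)).le).isClosed_range T.uniformContinuous

theorem wavelet_transform_image_reproducing_general
    {G : Type*} [Group G] [TopologicalSpace G] [MeasurableSpace G]
    (μ : Measure G)
    {E : Type*} [NormedAddCommGroup E] [InnerProductSpace ℂ E] [CompleteSpace E]
    (ρ : G →* (E ≃ₗᵢ[ℂ] E)) (hcont : ∀ v : E, Continuous fun g : G => ρ g v)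
    (ψ : E)
    (W : E →L[ℂ] Lp ℂ 2 μ)
    (hW : ∀ u : E, (W u : G → ℂ) =ᵐ[μ] fun g : G => ⟪ρ g ψ, u⟫_ℂ)
    (C : ℝ) (hC0 : 0 < C)
    (hC : ∀ u v : E, ⟪W u, W v⟫_ℂ = (C : ℂ) * ⟪u, v⟫_ℂ) :
    -- `Im W` is closed in `L²(G)`
    IsClosed (Set.range W) ∧
    -- every element of `Im W` has a continuous representative,
    -- namely the matrix coefficient itself
    (∀ u : E, (Continuous fun g : G => ⟪ρ g ψ, u⟫_ℂ) ∧
      (W u : G → ℂ) =ᵐ[μ] fun g : G => ⟪ρ g ψ, u⟫_ℂ) ∧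
    -- point evaluations (on the continuous representatives) are continuous on `Im W`
    (∀ g : G, ∃ c : ℝ, ∀ u : E, ‖⟪ρ g ψ, u⟫_ℂ‖ ≤ c * ‖W u‖) ∧
    -- `U_ψ = C^{-1/2} W` is a unitary isomorphism onto `Im W`
    (∀ u : E, ‖W u‖ = Real.sqrt C * ‖u‖) := by
  have hnorm (u : E) : ‖W u‖ = √C * ‖u‖ :=
    norm_eq_sqrt_mul_norm_of_inner_self_eq hC0.le (hC u u)
  have hsqrt : 0 < √C := Real.sqrt_pos.2 hC0
  refine ⟨W.isClosed_range_of_norm_eq_mul hsqrt hnorm,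
    fun u => ⟨(hcont ψ).inner continuous_const, hW u⟩,
    fun g => ⟨‖ψ‖ * (√C)⁻¹, fun u => ?_⟩, hnorm⟩
  calc ‖⟪ρ g ψ, u⟫_ℂ‖ ≤ ‖ψ‖ * ‖u‖ := norm_inner_linearIsometryEquiv_le (ρ g) ψ u
    _ = ‖ψ‖ * (√C)⁻¹ * ‖W u‖ := by
      rw [norm_eq_inv_mul_norm_of_norm_eq_mul hsqrt.ne' (hnorm u), mul_assoc]

/-- Let `ψ` be a wavelet for an irreducible unitary representation `(ρ, H_ρ)` of a
locally compact Hausdorff group `G`, `W : H_ρ → L²(G)` the wavelet transform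
`W u = [g ↦ (u ∣ ρ(g)ψ)]` and `C = C_{ψ,ψ} > 0` the constant with
`(W u ∣ W v) = C (u ∣ v)`.  Then `Im W` is a closed subspace of `L²(G)` consisting of
(classes of) continuous functions, point evaluations on `Im W` are continuous (so
`Im W` is a reproducing Hilbert space), and `U_ψ = C^{-1/2} W` is a unitary
isomorphism of `H_ρ` onto `Im W` (i.e. `‖W u‖ = √C ‖u‖` for all `u`). -/
theorem wavelet_transform_image_reproducing
    {G : Type*} [Group G] [TopologicalSpace G] [IsTopologicalGroup G]
    [LocallyCompactSpace G] [T2Space G] [MeasurableSpace G] [BorelSpace G]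
    (μ : Measure G) [μ.IsHaarMeasure]
    {E : Type*} [NormedAddCommGroup E] [InnerProductSpace ℂ E] [CompleteSpace E]
    (ρ : G →* (E ≃ₗᵢ[ℂ] E)) (hcont : ∀ v : E, Continuous fun g : G => ρ g v)
    (hirr : IsIrreducibleRep ρ)
    (ψ : E) (hψ0 : ψ ≠ 0)
    (hψ : ∀ v : E, MemLp (fun g : G => ⟪ρ g ψ, v⟫_ℂ) 2 μ)
    (W : E →L[ℂ] Lp ℂ 2 μ)
    (hW : ∀ u : E, (W u : G → ℂ) =ᵐ[μ] fun g : G => ⟪ρ g ψ, u⟫_ℂ)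
    (C : ℝ) (hC0 : 0 < C)
    (hC : ∀ u v : E, ⟪W u, W v⟫_ℂ = (C : ℂ) * ⟪u, v⟫_ℂ) :
    -- `Im W` is closed in `L²(G)`
    IsClosed (Set.range W) ∧
    -- every element of `Im W` has a continuous representative,
    -- namely the matrix coefficient itself
    (∀ u : E, (Continuous fun g : G => ⟪ρ g ψ, u⟫_ℂ) ∧
      (W u : G → ℂ) =ᵐ[μ] fun g : G => ⟪ρ g ψ, u⟫_ℂ) ∧
    -- point evaluations (on the continuous representatives) are continuous on `Im W`
    (∀ g : G, ∃ c : ℝ, ∀ u : E, ‖⟪ρ g ψ, u⟫_ℂ‖ ≤ c * ‖W u‖) ∧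
    -- `U_ψ = C^{-1/2} W` is a unitary isomorphism onto `Im W`
    (∀ u : E, ‖W u‖ = Real.sqrt C * ‖u‖) :=
  wavelet_transform_image_reproducing_general μ ρ hcont ψ W hW C hC0 hC
end
end
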